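/- Define J₀ : ℝ → ℝ by J₀(x) = (1/(2π)) · ∫_{φ=−π}^{π} cos(x · sin(φ)) dφ. Then for every real number a, (1/(π/2 · 2π))² · ∫_{θ_j=0}^{π/2} ∫_{φ_j=−π}^{π} ∫_{θ_i=0}^{π/2} ∫_{φ_i=−π}^{π} cos( a·( sin(θ_j) sin(φ_j) − sin(θ_i) sin(φ_i) ) ) dφ_i dθ_i dφ_j dθ_j = ( J₀(a/2) )⁴. -/

import Mathlib

/-- The Bessel function of the first kind of order zero, via its integral
representation J₀(x) = (1/(2π)) ∫_{−π}^{π} cos(x sinφ) dφ. -/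
noncomputable def besselJ0 (x : ℝ) : ℝ :=
  (1 / (2 * Real.pi)) * ∫ φ in (-Real.pi)..Real.pi, Real.cos (x * Real.sin φ)

/-!
Write `S z = ∫_{-π}^{π} cos (z sin φ) dφ = 2π J₀(z)` and
`F a = ∫_0^{π/2} ∫_{-π}^{π} cos (a sin θ sin φ) dφ dθ`. Since `φ ↦ sin (c sin φ)` is odd, expanding
`cos (x + c sin φ)` shows `∫ cos (x + c sin φ) dφ = cos x · S c`; applied twice, this turns the
fourfold integral into `F a ^ 2`. Neumann's argument gives `S z ^ 2 = 4 F (2z)`: `S z ^ 2` is the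
double integral of `cos (z sin α + z sin β)`, the substitution `β = 2u - α` turns
`sin α + sin β` into `2 sin u cos (u - α)`, and by periodicity the `α`-integral of
`cos (c cos (u - α))` is again `S c`. Hence `F a = π² J₀(a/2)²`.
-/

open Real Function Set

namespace intervalIntegral

variable {E : Type*} [NormedAddCommGroup E] [NormedSpace ℝ E]

theorem integral_of_odd {f : ℝ → E} (hf : ∀ x, f (-x) = -f x) (b : ℝ) :
    ∫ x in -b..b, f x = 0 := by
  have h : ∫ x in -b..b, f x = -∫ x in -b..b, f x := by
    simpa only [hf, integral_neg, neg_neg] using (integral_comp_neg (a := -b) (b := b) f).symm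
  have h2 : (2 : ℝ) • ∫ x in -b..b, f x = 0 := by
    rw [two_smul]; nth_rewrite 2 [h]; exact add_neg_cancel _
  simpa using h2

theorem integral_of_even {f : ℝ → E} (hf : ∀ x, f (-x) = f x) {b : ℝ}
    (hint : IntervalIntegrable f MeasureTheory.volume 0 b) :
    ∫ x in -b..b, f x = (2 : ℝ) • ∫ x in 0..b, f x := by
  have hneg : ∫ x in -b..0, f x = ∫ x in 0..b, f x := by
    simpa only [hf, neg_zero] using (integral_comp_neg (a := 0) (b := b) f).symm
  have hint' : IntervalIntegrable f MeasureTheory.volume (-b) 0 := by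
    simpa only [hf, neg_zero] using ((IntervalIntegrable.iff_comp_neg).mp hint).symm
  rw [← integral_add_adjacent_intervals hint' hint, hneg, two_smul]

theorem _root_.Function.Periodic.intervalIntegral_comp_add_right {f : ℝ → E} {a b : ℝ}
    (hf : Periodic f (b - a)) (t : ℝ) :
    ∫ x in a..b, f (x + t) = ∫ x in a..b, f x := by
  have h := hf.intervalIntegral_add_eq (a + t) a
  rwa [add_sub_cancel, add_right_comm, add_sub_cancel, ← integral_comp_add_right] at h

theorem _root_.Continuous.intervalIntegral_intervalIntegral_swap {f : ℝ → ℝ → E}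
    (hf : Continuous f.uncurry) (a b c d : ℝ) :
    ∫ x in a..b, ∫ y in c..d, f x y = ∫ y in c..d, ∫ x in a..b, f x y :=
  MeasureTheory.intervalIntegral_intervalIntegral_swap <|
    (hf.continuousOn.integrableOn_compact (isCompact_uIcc.prod isCompact_uIcc)).mono_set
      (prod_mono uIoc_subset_uIcc uIoc_subset_uIcc)

end intervalIntegral

open intervalIntegral

-- The period is written as the length of `[-π, π]`, the form that
-- `Periodic.intervalIntegral_comp_add_right` consumes.
lemma periodic_comp_sin {g : ℝ → ℝ} : Periodic (fun φ => g (sin φ)) (π - -π) := by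
  rw [sub_neg_eq_add, ← two_mul]
  exact sin_periodic.comp g

lemma integral_cos_add_mul_sin (x c : ℝ) :
    ∫ φ in -π..π, cos (x + c * sin φ) = cos x * ∫ φ in -π..π, cos (c * sin φ) := by
  have hsin : ∫ φ in -π..π, sin (c * sin φ) = 0 :=
    integral_of_odd (fun φ => by rw [sin_neg, mul_neg, sin_neg]) π
  simp_rw [cos_add]
  rw [integral_sub ((by fun_prop : Continuous _).intervalIntegrable _ _)
    ((by fun_prop : Continuous _).intervalIntegrable _ _), integral_const_mul, integral_const_mul,
    hsin, mul_zero, sub_zero]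

lemma integral_cos_mul_sin_add_mul_sin (z α : ℝ) :
    ∫ β in -π..π, cos (z * sin α + z * sin β)
      = 2 * ∫ u in -(π / 2)..π / 2, cos (2 * z * sin u * cos (u - α)) := by
  have hprod (u : ℝ) : z * sin α + z * sin (2 * u - α) = 2 * z * sin u * cos (u - α) := by
    rw [show 2 * u - α = u + (u - α) by ring, sin_add, show α = u - (u - α) by ring, sin_sub]
    ring_nf
  calc ∫ β in -π..π, cos (z * sin α + z * sin β)
      = ∫ β in -π..π, cos (z * sin α + z * sin (β + -α)) :=
        (periodic_comp_sin (g := fun s => cos (z * sin α + z * s))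
          |>.intervalIntegral_comp_add_right _).symm
    _ = 2 * ∫ u in -(π / 2)..π / 2, cos (z * sin α + z * sin (2 * u + -α)) := by
        rw [← smul_eq_mul (2 : ℝ),
          smul_integral_comp_mul_left (fun β => cos (z * sin α + z * sin (β + -α))),
          mul_neg, mul_div_cancel₀ _ two_ne_zero]
    _ = 2 * ∫ u in -(π / 2)..π / 2, cos (2 * z * sin u * cos (u - α)) := by
        simp_rw [← sub_eq_add_neg, hprod]

lemma integral_cos_mul_cos_sub (c u : ℝ) :
    ∫ α in -π..π, cos (c * cos (u - α)) = ∫ φ in -π..π, cos (c * sin φ) := by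
  have h (α : ℝ) : cos (u - α) = sin (α + (π / 2 - u)) := by
    rw [← cos_neg, ← cos_sub_pi_div_two]; congr 1; ring
  simp_rw [h]
  exact periodic_comp_sin (g := fun s => cos (c * s)) |>.intervalIntegral_comp_add_right _

lemma sq_integral_cos_mul_sin (z : ℝ) :
    (∫ φ in -π..π, cos (z * sin φ)) ^ 2
      = 4 * ∫ θ in 0..π / 2, ∫ φ in -π..π, cos (2 * z * sin θ * sin φ) := by
  have heven : ∀ θ, ∫ φ in -π..π, cos (2 * z * sin (-θ) * sin φ)
      = ∫ φ in -π..π, cos (2 * z * sin θ * sin φ) := by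
    intro θ; simp only [sin_neg, mul_neg, neg_mul, cos_neg]
  calc (∫ φ in -π..π, cos (z * sin φ)) ^ 2
      = ∫ α in -π..π, ∫ β in -π..π, cos (z * sin α + z * sin β) := by
        simp_rw [integral_cos_add_mul_sin, integral_mul_const, sq]
    _ = 2 * ∫ u in -(π / 2)..π / 2, ∫ α in -π..π, cos (2 * z * sin u * cos (u - α)) := by
        simp_rw [integral_cos_mul_sin_add_mul_sin, integral_const_mul]
        rw [Continuous.intervalIntegral_intervalIntegral_swap (by fun_prop)]
    _ = 2 * ∫ u in -(π / 2)..π / 2, ∫ φ in -π..π, cos (2 * z * sin u * sin φ) := by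
        simp_rw [integral_cos_mul_cos_sub]
    _ = 4 * ∫ θ in 0..π / 2, ∫ φ in -π..π, cos (2 * z * sin θ * sin φ) := by
        rw [integral_of_even heven (Continuous.intervalIntegrable (by fun_prop) _ _), smul_eq_mul,
          ← mul_assoc]
        norm_num

lemma integral_integral_cos_mul_sin_mul_sin (a : ℝ) :
    ∫ θ in 0..π / 2, ∫ φ in -π..π, cos (a * sin θ * sin φ) = π ^ 2 * besselJ0 (a / 2) ^ 2 := by
  have h := sq_integral_cos_mul_sin (a / 2)
  rw [mul_div_cancel₀ _ two_ne_zero] at h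
  rw [besselJ0, mul_pow, h]
  field_simp
  ring

lemma integral_integral_cos_mul_sub (a x : ℝ) :
    ∫ θ in 0..π / 2, ∫ φ in -π..π, cos (a * (x - sin θ * sin φ))
      = cos (a * x) * ∫ θ in 0..π / 2, ∫ φ in -π..π, cos (a * sin θ * sin φ) := by
  have h (θ φ : ℝ) : a * (x - sin θ * sin φ) = a * x + -(a * sin θ) * sin φ := by ring
  simp_rw [h, integral_cos_add_mul_sin, neg_mul, cos_neg, integral_const_mul]

/-- For every real number a,
(1/(π/2 · 2π))² · ∫∫∫∫ cos(a·(sinθ_j sinφ_j − sinθ_i sinφ_i)) dφ_i dθ_i dφ_j dθ_j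
= (J₀(a/2))⁴. -/
theorem fourfold_integral_cos_eq_besselJ0_pow_four (a : ℝ) :
    (1 / (Real.pi / 2 * (2 * Real.pi))) ^ 2 *
      (∫ θj in (0 : ℝ)..(Real.pi / 2), ∫ φj in (-Real.pi)..Real.pi,
        ∫ θi in (0 : ℝ)..(Real.pi / 2), ∫ φi in (-Real.pi)..Real.pi,
          Real.cos (a * (Real.sin θj * Real.sin φj - Real.sin θi * Real.sin φi))) =
      (besselJ0 (a / 2)) ^ 4 := by
  simp_rw [integral_integral_cos_mul_sub, integral_mul_const, ← mul_assoc,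
    integral_integral_cos_mul_sin_mul_sin]
  field_simp
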